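/- Let ε, δ > 0, λ ∈ ℝ, λ ≠ 0, and α, β, ρ, σ : ℤ → ℝ. Define a_n = ε Σ_k^n α_k, b_n = ε Σ_k^n β_k, c_n = ε Σ_k^n a_k β_k, r_m = δ Σ_k^m ρ_k, s_m = δ Σ_k^m σ_k, t_m = δ Σ_k^m r_k σ_k (bidirectional sums), and define f^m_n ∈ ℝ³ by f^m_n = ( a_n λ + (r_m s_m − t_m)λ⁻², (a_n b_n − c_n)λ² + r_m λ⁻¹, a_n r_m − (a_n b_n − c_n)(r_m s_m − t_m) + λ³ ε Σ_k^n α_k c_{k−1} + λ⁻³ δ Σ_k^m ρ_k t_{k−1} ). Then for all (n, m) ∈ ℤ²: f^m_{n+1} − f^m_n = ε α_{n+1} · ( λ, b_n λ², r_m − b_n(r_m s_m − t_m) + c_n λ³ ) and f^{m+1}_n − f^m_n = δ ρ_{m+1} · ( s_m λ⁻², λ⁻¹, a_n − s_m(a_n b_n − c_n) + t_m λ⁻³ ). -/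

import Mathlib

/-! Each of `a, b, c, r, s, t` and of the two sums in the third coordinate grows by one term
per step (`bsum_add_one`); substituting these recurrences, both differences become polynomial
identities in the entries, `λ` and `λ⁻¹`. -/

/-- Bidirectional sum: `Σ_k^n x_k = Σ_{k=1}^n x_k` for `n ≥ 1`, `0` for `n = 0`, and
`−Σ_{k=n+1}^0 x_k` for `n ≤ −1`. -/
noncomputable def bsum (x : ℤ → ℝ) (n : ℤ) : ℝ :=
  if 1 ≤ n then ∑ k ∈ Finset.Icc (1:ℤ) n, x k
  else if n = 0 then 0
  else -∑ k ∈ Finset.Icc (n+1) (0:ℤ), x k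

open Finset

lemma bsum_of_nonneg (x : ℤ → ℝ) {n : ℤ} (hn : 0 ≤ n) : bsum x n = ∑ k ∈ Icc 1 n, x k := by
  rcases hn.eq_or_lt with rfl | hn
  · simp [bsum]
  · exact if_pos hn

lemma bsum_of_nonpos (x : ℤ → ℝ) {n : ℤ} (hn : n ≤ 0) :
    bsum x n = -∑ k ∈ Icc (n + 1) 0, x k := by
  rcases hn.eq_or_lt with rfl | hn
  · simp [bsum]
  · rw [bsum, if_neg (by omega), if_neg hn.ne]

lemma bsum_add_one (x : ℤ → ℝ) (n : ℤ) : bsum x (n + 1) = bsum x n + x (n + 1) := by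
  rcases le_or_gt 0 n with hn | hn
  · rw [bsum_of_nonneg x hn, bsum_of_nonneg x (by omega),
      ← insert_Icc_right_eq_Icc_add_one (by omega), sum_insert (by simp), add_comm]
  · rw [bsum_of_nonpos x hn.le, bsum_of_nonpos x (by omega),
      ← insert_Icc_add_one_left_eq_Icc (by omega : n + 1 ≤ 0), sum_insert (by simp)]
    ring

lemma eq_add_of_forall_eq_mul_bsum {a x : ℤ → ℝ} {ε : ℝ} (ha : ∀ n, a n = ε * bsum x n)
    (n : ℤ) : a (n + 1) = a n + ε * x (n + 1) := by
  rw [ha, ha, bsum_add_one, mul_add]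

theorem stmt12_general (ε δ : ℝ) (lam : ℝ)
    (α β ρ σ : ℤ → ℝ)
    (a b c r s t : ℤ → ℝ)
    (ha : ∀ n, a n = ε * bsum α n)
    (hb : ∀ n, b n = ε * bsum β n)
    (hc : ∀ n, c n = ε * bsum (fun k => a k * β k) n)
    (hr : ∀ m, r m = δ * bsum ρ m)
    (hs : ∀ m, s m = δ * bsum σ m)
    (ht : ∀ m, t m = δ * bsum (fun k => r k * σ k) m)
    (f : ℤ → ℤ → (Fin 3 → ℝ))
    (hf : ∀ n m, f n m =
      ![a n * lam + (r m * s m - t m) * lam⁻¹ ^ 2,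
        (a n * b n - c n) * lam ^ 2 + r m * lam⁻¹,
        a n * r m - (a n * b n - c n) * (r m * s m - t m)
          + lam ^ 3 * ε * bsum (fun k => α k * c (k-1)) n
          + lam⁻¹ ^ 3 * δ * bsum (fun k => ρ k * t (k-1)) m]) :
    ∀ n m : ℤ,
      f (n+1) m - f n m = (ε * α (n+1)) •
        ![lam, b n * lam ^ 2, r m - b n * (r m * s m - t m) + c n * lam ^ 3] ∧
      f n (m+1) - f n m = (δ * ρ (m+1)) •
        ![s m * lam⁻¹ ^ 2, lam⁻¹, a n - s m * (a n * b n - c n) + t m * lam⁻¹ ^ 3] := by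
  intro n m
  have hA := eq_add_of_forall_eq_mul_bsum ha n
  have hB := eq_add_of_forall_eq_mul_bsum hb n
  have hC := eq_add_of_forall_eq_mul_bsum hc n
  have hR := eq_add_of_forall_eq_mul_bsum hr m
  have hS := eq_add_of_forall_eq_mul_bsum hs m
  have hT := eq_add_of_forall_eq_mul_bsum ht m
  have hX := bsum_add_one (fun k => α k * c (k - 1)) n
  have hY := bsum_add_one (fun k => ρ k * t (k - 1)) m
  simp only [add_sub_cancel_right] at hX hY
  simp only [hf, Matrix.cons_sub_cons, Matrix.empty_sub_empty, Matrix.smul_cons,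
    Matrix.smul_empty, smul_eq_mul]
  constructor <;> refine Matrix.vec3_eq ?_ ?_ ?_ <;>
    simp only [hA, hB, hC, hR, hS, hT, hX, hY] <;> ring

/-- The representation formula `f^m_n` for the associated family of discrete indefinite
improper affine spheres: its forward differences are the stated columns of the discrete
moving frame (times `ε`, `δ`).  Here `f n m` denotes `f^m_n`. -/
theorem stmt12 (ε δ : ℝ) (hε : 0 < ε) (hδ : 0 < δ) (lam : ℝ) (hlam : lam ≠ 0)
    (α β ρ σ : ℤ → ℝ)
    (a b c r s t : ℤ → ℝ)
    (ha : ∀ n, a n = ε * bsum α n)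
    (hb : ∀ n, b n = ε * bsum β n)
    (hc : ∀ n, c n = ε * bsum (fun k => a k * β k) n)
    (hr : ∀ m, r m = δ * bsum ρ m)
    (hs : ∀ m, s m = δ * bsum σ m)
    (ht : ∀ m, t m = δ * bsum (fun k => r k * σ k) m)
    (f : ℤ → ℤ → (Fin 3 → ℝ))
    (hf : ∀ n m, f n m =
      ![a n * lam + (r m * s m - t m) * lam⁻¹ ^ 2,
        (a n * b n - c n) * lam ^ 2 + r m * lam⁻¹,
        a n * r m - (a n * b n - c n) * (r m * s m - t m)
          + lam ^ 3 * ε * bsum (fun k => α k * c (k-1)) n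
          + lam⁻¹ ^ 3 * δ * bsum (fun k => ρ k * t (k-1)) m]) :
    ∀ n m : ℤ,
      f (n+1) m - f n m = (ε * α (n+1)) •
        ![lam, b n * lam ^ 2, r m - b n * (r m * s m - t m) + c n * lam ^ 3] ∧
      f n (m+1) - f n m = (δ * ρ (m+1)) •
        ![s m * lam⁻¹ ^ 2, lam⁻¹, a n - s m * (a n * b n - c n) + t m * lam⁻¹ ^ 3] :=
  stmt12_general ε δ lam α β ρ σ a b c r s t ha hb hc hr hs ht f hf
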